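/- arXiv:2201.03936 — 10 statements merged into one kernel-verified Lean document; each statement's English description precedes it below -/
import Mathlib

section
/- Let G be a group and B : G → G a Rota–Baxter operator, i.e. B(g · B(g) · h · B(g)⁻¹) = B(g) · B(h) for all g, h ∈ G. Then the operation g ∘ h := g · B(g) · h · B(g)⁻¹ makes (G, ∘) a group. -/
/-- A Rota–Baxter operator on a group `G`. -/
def IsRotaBaxter {G : Type*} [Group G] (B : G → G) : Prop :=
  ∀ g h : G, B (g * B g * h * (B g)⁻¹) = B g * B h

/-- If `B` is a Rota–Baxter operator on `G`, then `g ∘ h := g·B(g)·h·B(g)⁻¹`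
makes `(G, ∘)` a group. -/
theorem stmt0 {G : Type*} [Group G] (B : G → G) (hB : IsRotaBaxter B) :
    let circ : G → G → G := fun g h => g * B g * h * (B g)⁻¹
    (∀ a b c : G, circ (circ a b) c = circ a (circ b c)) ∧
    (∃ e : G, (∀ a : G, circ e a = a ∧ circ a e = a) ∧
      ∀ a : G, ∃ b : G, circ a b = e ∧ circ b a = e) := by
  intro circ
  have assoc : ∀ a b c : G, circ (circ a b) c = circ a (circ b c) := by
    intro a b c
    show (a * B a * b * (B a)⁻¹) * B (a * B a * b * (B a)⁻¹) * c *
        (B (a * B a * b * (B a)⁻¹))⁻¹ =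
      a * B a * (b * B b * c * (B b)⁻¹) * (B a)⁻¹
    rw [hB a b]
    group
  have rid : ∀ a : G, circ a 1 = a := by
    intro a; show a * B a * 1 * (B a)⁻¹ = a; group
  have rinv : ∀ a : G, circ a ((B a)⁻¹ * a⁻¹ * B a) = 1 := by
    intro a; show a * B a * ((B a)⁻¹ * a⁻¹ * B a) * (B a)⁻¹ = 1; group
  have linv : ∀ a : G, circ ((B a)⁻¹ * a⁻¹ * B a) a = 1 := by
    intro a
    set y := (B a)⁻¹ * a⁻¹ * B a with hy
    set z := (B y)⁻¹ * y⁻¹ * B y with hz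
    have h1 : circ (circ y a) y = y := by
      rw [assoc, rinv a, rid]
    calc circ y a = circ (circ y a) 1 := (rid _).symm
      _ = circ (circ y a) (circ y z) := by rw [rinv y]
      _ = circ (circ (circ y a) y) z := (assoc _ _ _).symm
      _ = circ y z := by rw [h1]
      _ = 1 := rinv y
  have lid : ∀ a : G, circ 1 a = a := by
    intro a
    calc circ 1 a = circ (circ a ((B a)⁻¹ * a⁻¹ * B a)) a := by rw [rinv a]
      _ = circ a (circ ((B a)⁻¹ * a⁻¹ * B a) a) := assoc _ _ _
      _ = circ a 1 := by rw [linv a]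
      _ = a := rid a
  exact ⟨assoc, 1, fun a => ⟨lid a, rid a⟩,
    fun a => ⟨(B a)⁻¹ * a⁻¹ * B a, rinv a, linv a⟩⟩
end

section
/- Let G be a group and γ : G → Aut(G) a function satisfying γ(g · γ(g)(h)) = γ(g) γ(h) for all g, h ∈ G (a gamma function). Then the operation g ∘ h := g · γ(g)(h) makes (G, ∘) a group, with the same identity element as (G, ·). -/
/-- A gamma function on a group `G`: `γ(g·γ(g)(h)) = γ(g)γ(h)`. -/
def IsGamma {G : Type*} [Group G] (γ : G → MulAut G) : Prop :=
  ∀ g h : G, γ (g * γ g h) = γ g * γ h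

/-- If `γ` is a gamma function on `G`, then `g ∘ h := g · γ(g)(h)` makes
`(G, ∘)` a group, with the same identity element as `(G, ·)`. -/
theorem stmt2 {G : Type*} [Group G] (γ : G → MulAut G) (hγ : IsGamma γ) :
    let circ : G → G → G := fun g h => g * γ g h
    (∀ a b c : G, circ (circ a b) c = circ a (circ b c)) ∧
    (∀ a : G, circ 1 a = a ∧ circ a 1 = a) ∧
    (∀ a : G, ∃ b : G, circ a b = 1 ∧ circ b a = 1) := by
  intro circ
  have hone : γ 1 = 1 := by
    have := hγ 1 1
    simp at this
    exact this
  refine ⟨?_, ?_, ?_⟩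
  · intro a b c
    simp only [circ, hγ a b, MulAut.mul_apply, map_mul, mul_assoc]
  · intro a
    simp [circ, hone]
  · intro a
    refine ⟨(γ a)⁻¹ a⁻¹, ?_, ?_⟩
    · simp [circ]
    · have hinv : γ ((γ a)⁻¹ a⁻¹) = (γ a)⁻¹ := by
        have := hγ a ((γ a)⁻¹ a⁻¹)
        simp [hone] at this
        exact eq_inv_of_mul_eq_one_right (by simpa using this.symm)
      simp only [circ, hinv]
      simp [← map_mul]
end

section
/- Let G be a group and B a Rota–Baxter operator on G. Then γ(g) := ι(B(g)), where ι : G → Inn(G) is conjugation, is a gamma function on G taking values in the inner automorphism group. -/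
/-- If `B` is a Rota–Baxter operator on `G`, then `γ(g) := ι(B(g))` (conjugation
by `B(g)`) is a gamma function on `G` with values in the inner automorphism
group. -/
theorem stmt5 {G : Type*} [Group G] (B : G → G) (hB : IsRotaBaxter B) :
    IsGamma (fun g : G => MulAut.conj (B g)) ∧
    ∀ g : G, MulAut.conj (B g) ∈ (MulAut.conj : G →* MulAut G).range := by
  constructor
  · intro g h
    have h1 : (g * (fun g : G => MulAut.conj (B g)) g h) = g * B g * h * (B g)⁻¹ := by
      simp [MulAut.conj_apply, mul_assoc]
    simp only [h1]
    rw [show (MulAut.conj (B (g * B g * h * (B g)⁻¹)) : MulAut G) = MulAut.conj (B g * B h) from congrArg _ (hB g h)]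
    simp [map_mul]
  · intro g
    exact ⟨B g, rfl⟩
end

section
/- Let G be a group with trivial centre, and let γ : G → Inn(G) be a gamma function. Then B := ι⁻¹ ∘ γ, where ι : G → Inn(G) is the (iso)morphism given by conjugation, is a Rota–Baxter operator on G satisfying γ(g) = ι(B(g)) for all g. -/
/-- If `G` is centreless and `γ` is a gamma function on `G` with values in
`Inn(G)`, then `B := ι⁻¹ ∘ γ` is a Rota–Baxter operator on `G` with
`γ(g) = ι(B(g))` for all `g`. -/
theorem stmt6 {G : Type*} [Group G] (hZ : Subgroup.center G = ⊥)
    (γ : G → MulAut G) (hγ : IsGamma γ)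
    (hinn : ∀ g : G, γ g ∈ (MulAut.conj : G →* MulAut G).range) :
    ∃ B : G → G, IsRotaBaxter B ∧ ∀ g : G, MulAut.conj (B g) = γ g := by
  choose B hB using hinn
  have hconjinj : Function.Injective (MulAut.conj : G →* MulAut G) := by
    rw [injective_iff_map_eq_one]
    intro a ha
    have : a ∈ Subgroup.center G := by
      rw [Subgroup.mem_center_iff]
      intro g
      have h2 : a * g * a⁻¹ = g := by rw [show a * g * a⁻¹ = MulAut.conj a g from rfl, ha]; rfl
      exact (mul_inv_eq_iff_eq_mul.mp h2).symm
    rw [hZ] at this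
    simpa using this
  refine ⟨B, ?_, hB⟩
  intro g h
  apply hconjinj
  have key : γ g h = B g * h * (B g)⁻¹ := by
    rw [← hB g]; rfl
  rw [hB, show g * B g * h * (B g)⁻¹ = g * γ g h by rw [key]; group,
    hγ g h, ← hB g, ← hB h, map_mul]
end

section
/- Let γ be a gamma function on G with values in Inn(G), C a lifting of γ and κ the associated 2-cocycle. Then γ comes from a Rota–Baxter operator (i.e. there is a Rota–Baxter operator B on G with γ(g) = ι(B(g)) for all g) if and only if the class of κ in H²((G,∘), Z(G)) is trivial. -/
/-- Let `γ` be a gamma function on `G` with values in `Inn(G)`, `C` a lifting of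
`γ`, and `κ` the associated `2`-cocycle. Then `γ` comes from a Rota–Baxter
operator if and only if the class of `κ` in `H²((G,∘), Z(G))` is trivial,
i.e. `κ` is a `2`-coboundary. -/
theorem stmt9 {G : Type*} [Group G] (γ : G → MulAut G) (hγ : IsGamma γ)
    (C : G → G) (hC : ∀ g : G, MulAut.conj (C g) = γ g)
    (κ : G → G → G) (hκ : ∀ g h : G, C g * C h = κ g h * C (g * γ g h)) :
    (∃ B : G → G, IsRotaBaxter B ∧ ∀ g : G, MulAut.conj (B g) = γ g) ↔
    (∃ σ : G → G, (∀ g : G, σ g ∈ Subgroup.center G) ∧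
      ∀ g h : G, κ g h = (σ g)⁻¹ * (σ h)⁻¹ * σ (g * γ g h)) := by
  constructor
  · rintro ⟨B, hB, hBγ⟩
    have hconjB : ∀ g x : G, B g * x * (B g)⁻¹ = C g * x * (C g)⁻¹ := by
      intro g x
      have h1 := (hBγ g).trans (hC g).symm
      have h2 := congrArg (fun f : MulAut G => f x) h1
      simpa [MulAut.conj_apply] using h2
    have hz : ∀ x a : G, Commute (B x * (C x)⁻¹) a := by
      intro x a
      have h2 := hconjB x ((C x)⁻¹ * a * C x)
      have h3 : B x * ((C x)⁻¹ * a * C x) * (B x)⁻¹ = a := by rw [h2]; group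
      show B x * (C x)⁻¹ * a = a * (B x * (C x)⁻¹)
      calc B x * (C x)⁻¹ * a
          = (B x * ((C x)⁻¹ * a * C x) * (B x)⁻¹) * (B x * (C x)⁻¹) := by group
        _ = a * (B x * (C x)⁻¹) := by rw [h3]
    refine ⟨fun g => B g * (C g)⁻¹, fun g =>
      Subgroup.mem_center_iff.mpr (fun a => (hz g a).eq.symm), fun g h => ?_⟩
    have hγh : γ g h = B g * h * (B g)⁻¹ := by
      have h2 := congrArg (fun f : MulAut G => f h) (hBγ g)
      simpa [MulAut.conj_apply] using h2.symm
    have hBmul : B (g * γ g h) = B g * B h := by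
      rw [hγh, ← mul_assoc, ← mul_assoc]; exact hB g h
    have hκ' : κ g h = C g * C h * (C (g * γ g h))⁻¹ := by
      rw [hκ g h]; group
    rw [hκ']
    have hw : (B g)⁻¹ * (B h * (C h)⁻¹)⁻¹ * B g = (B h * (C h)⁻¹)⁻¹ := by
      have h4 := (hz h (B g)).inv_left.eq
      rw [mul_assoc, h4]; group
    symm
    calc (B g * (C g)⁻¹)⁻¹ * (B h * (C h)⁻¹)⁻¹ * (B (g * γ g h) * (C (g * γ g h))⁻¹)
        = (B g * (C g)⁻¹)⁻¹ * (B h * (C h)⁻¹)⁻¹ * (B g * B h * (C (g * γ g h))⁻¹) := by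
          rw [hBmul]
      _ = C g * ((B g)⁻¹ * (B h * (C h)⁻¹)⁻¹ * B g) * B h * (C (g * γ g h))⁻¹ := by group
      _ = C g * (B h * (C h)⁻¹)⁻¹ * B h * (C (g * γ g h))⁻¹ := by rw [hw]
      _ = C g * C h * (C (g * γ g h))⁻¹ := by group
  · rintro ⟨σ, hσ, hκσ⟩
    have hcσ : ∀ g a : G, σ g * a = a * σ g :=
      fun g a => (Subgroup.mem_center_iff.mp (hσ g) a).symm
    have hconj : ∀ g : G, MulAut.conj (σ g * C g) = γ g := by
      intro g
      rw [map_mul, ← hC g]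
      have h1 : MulAut.conj (σ g) = 1 := by
        ext a
        show σ g * a * (σ g)⁻¹ = a
        rw [hcσ g a, mul_inv_cancel_right]
      rw [h1, one_mul]
    refine ⟨fun g => σ g * C g, fun g h => ?_, hconj⟩
    have harg : g * (σ g * C g) * h * (σ g * C g)⁻¹ = g * γ g h := by
      have h2 := congrArg (fun f : MulAut G => f h) (hconj g)
      have h3 : σ g * C g * h * (σ g * C g)⁻¹ = γ g h := by
        rw [← MulAut.conj_apply]; exact h2
      rw [← h3]; group
    rw [harg]
    symm
    calc σ g * C g * (σ h * C h)
        = σ g * (C g * σ h) * C h := by group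
      _ = σ g * (σ h * C g) * C h := by rw [hcσ h (C g)]
      _ = σ g * σ h * (C g * C h) := by group
      _ = σ g * σ h * (κ g h * C (g * γ g h)) := by rw [hκ g h]
      _ = σ g * σ h * ((σ g)⁻¹ * (σ h)⁻¹ * σ (g * γ g h)) * C (g * γ g h) := by
          rw [hκσ g h]; group
      _ = σ g * (σ h * (σ g)⁻¹) * (σ h)⁻¹ * σ (g * γ g h) * C (g * γ g h) := by group
      _ = σ g * ((σ g)⁻¹ * σ h) * (σ h)⁻¹ * σ (g * γ g h) * C (g * γ g h) := by
          rw [hcσ h (σ g)⁻¹]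
      _ = σ (g * γ g h) * C (g * γ g h) := by group
end

section
/- Let B₁, B₂ be Rota–Baxter operators on a group G. Then ι∘B₁ = ι∘B₂ (they yield the same gamma function) if and only if there exists a group homomorphism ζ : (G, ∘) → Z(G) such that B₂(g) = ζ(g) · B₁(g) for all g ∈ G, where ∘ is the circle operation associated to B₁. -/
/-- Two Rota–Baxter operators `B₁, B₂` on `G` yield the same gamma function if
and only if there is a group homomorphism `ζ : (G,∘) → Z(G)` (where `∘` is the
circle operation of `B₁`) with `B₂(g) = ζ(g)·B₁(g)` for all `g`. -/
theorem stmt10 {G : Type*} [Group G] (B₁ B₂ : G → G)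
    (h₁ : IsRotaBaxter B₁) (h₂ : IsRotaBaxter B₂) :
    (∀ g : G, MulAut.conj (B₁ g) = MulAut.conj (B₂ g)) ↔
    (∃ ζ : G → G, (∀ g : G, ζ g ∈ Subgroup.center G) ∧
      (∀ g h : G, ζ (g * B₁ g * h * (B₁ g)⁻¹) = ζ g * ζ h) ∧
      ∀ g : G, B₂ g = ζ g * B₁ g) := by
  constructor
  · intro hc
    set ζ : G → G := fun g => B₂ g * (B₁ g)⁻¹ with hζ
    have hconj : ∀ g x : G, B₁ g * x * (B₁ g)⁻¹ = B₂ g * x * (B₂ g)⁻¹ := by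
      intro g x
      have := congrArg (fun φ : MulAut G => φ x) (hc g)
      simpa [MulAut.conj_apply, mul_assoc] using this
    have hcent : ∀ g : G, ζ g ∈ Subgroup.center G := by
      intro g
      rw [Subgroup.mem_center_iff]
      intro a
      have h := hconj g ((B₁ g)⁻¹ * a * B₂ g)
      simp only [hζ]
      group
      group at h ⊢
      exact h
    refine ⟨ζ, hcent, ?_, fun g => by simp [hζ]⟩
    intro g h
    have hB₂ : B₂ (g * B₁ g * h * (B₁ g)⁻¹) = B₂ g * B₂ h := by
      have : g * B₁ g * h * (B₁ g)⁻¹ = g * (B₂ g * h * (B₂ g)⁻¹) := by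
        rw [← hconj g h]; group
      rw [this, show g * (B₂ g * h * (B₂ g)⁻¹) = g * B₂ g * h * (B₂ g)⁻¹ by group]
      exact h₂ g h
    have hB₁ : B₁ (g * B₁ g * h * (B₁ g)⁻¹) = B₁ g * B₁ h := h₁ g h
    simp only [hζ, hB₂, hB₁]
    have hch := (Subgroup.mem_center_iff.mp (hcent h)) (B₂ g)
    simp only [hζ] at hch
    calc B₂ g * B₂ h * (B₁ g * B₁ h)⁻¹
        = B₂ g * (B₂ h * (B₁ h)⁻¹) * (B₁ g)⁻¹ := by group
      _ = (B₂ h * (B₁ h)⁻¹) * B₂ g * (B₁ g)⁻¹ := by rw [← hch]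
      _ = B₂ g * (B₁ g)⁻¹ * (B₂ h * (B₁ h)⁻¹) := by
          rw [mul_assoc]
          exact (Subgroup.mem_center_iff.mp (hcent h) _).symm
  · rintro ⟨ζ, hcent, hhom, heq⟩ g
    ext x
    have hz := Subgroup.mem_center_iff.mp (hcent g)
    simp only [MulAut.conj_apply, heq g]
    rw [mul_inv_rev, show ζ g * B₁ g * x * ((B₁ g)⁻¹ * (ζ g)⁻¹)
        = ζ g * (B₁ g * x * (B₁ g)⁻¹) * (ζ g)⁻¹ by group,
      ← hz (B₁ g * x * (B₁ g)⁻¹)]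
    group
end

section
/- Let G be a group with centre Z(G), γ a gamma function with values in Inn(G), C a lifting with cocycle κ, and suppose σ : G → Z(G) satisfies κ(g,h) = σ(g)⁻¹ · σ(h)⁻¹ · σ(g ∘ h) for all g, h. Then B(g) := σ(g) · C(g) is a Rota–Baxter operator on G with ι(B(g)) = γ(g) for all g. -/
/-- If the `2`-cocycle `κ` associated to a lifting `C` of a gamma function `γ`
with values in `Inn(G)` is the coboundary of a map `σ : G → Z(G)`, i.e.
`κ(g,h) = σ(g)⁻¹·σ(h)⁻¹·σ(g ∘ h)`, then `B(g) := σ(g)·C(g)` is a Rota–Baxter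
operator on `G` with `ι(B(g)) = γ(g)` for all `g`. -/
theorem stmt11 {G : Type*} [Group G] (γ : G → MulAut G) (hγ : IsGamma γ)
    (C : G → G) (hC : ∀ g : G, MulAut.conj (C g) = γ g)
    (κ : G → G → G) (hκ : ∀ g h : G, C g * C h = κ g h * C (g * γ g h))
    (σ : G → G) (hσZ : ∀ g : G, σ g ∈ Subgroup.center G)
    (hσ : ∀ g h : G, κ g h = (σ g)⁻¹ * (σ h)⁻¹ * σ (g * γ g h)) :
    IsRotaBaxter (fun g : G => σ g * C g) ∧
    ∀ g : G, MulAut.conj (σ g * C g) = γ g := by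
  have hcomm : ∀ g x : G, σ g * x = x * σ g := fun g x =>
    (Subgroup.mem_center_iff.mp (hσZ g) x).symm
  have hconj : ∀ g : G, MulAut.conj (σ g * C g) = γ g := by
    intro g
    rw [map_mul, ← hC g]
    have : MulAut.conj (σ g) = 1 := by
      ext x
      rw [MulAut.conj_apply, hcomm g x, MulAut.one_apply]; group
    rw [this, one_mul]
  refine ⟨fun g h => ?_, hconj⟩
  have harg : g * (σ g * C g) * h * (σ g * C g)⁻¹ = g * γ g h := by
    have := congrArg (fun φ : MulAut G => φ h) (hconj g)
    simp only [MulAut.conj_apply] at this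
    rw [← this]; group
  simp only [harg]
  calc σ (g * γ g h) * C (g * γ g h)
      = σ g * σ h * (κ g h * C (g * γ g h)) := by
        rw [hσ g h]
        rw [hcomm g (σ h)]
        group
    _ = σ g * σ h * (C g * C h) := by rw [hκ]
    _ = σ g * C g * (σ h * C h) := by
        rw [mul_assoc, ← mul_assoc (σ h), hcomm h (C g)]
        group
end

section
/- Let p be an odd prime, H the Heisenberg group of order p³, and α ∈ ℤ/pℤ. Then γ(g) := ι(g^α) is a gamma function on H, and the associated circle operation is g ∘ h = g · h · [g,h]^α. -/
/-- The Heisenberg group of order `p³`,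
`H = ⟨u, v, k : uᵖ = vᵖ = kᵖ = 1, [u,v] = k, [u,k] = [v,k] = 1⟩`,
modelled on triples `⟨i, j, q⟩` representing the normal form `uⁱ vʲ k^q`. -/
@[ext] structure Heis (p : ℕ) where
  x : ZMod p
  y : ZMod p
  z : ZMod p

namespace Heis

variable {p : ℕ}

instance : Mul (Heis p) := ⟨fun a b => ⟨a.x + b.x, a.y + b.y, a.z + b.z - a.y * b.x⟩⟩
instance : One (Heis p) := ⟨⟨0, 0, 0⟩⟩
instance : Inv (Heis p) := ⟨fun a => ⟨-a.x, -a.y, -a.z - a.y * a.x⟩⟩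

lemma mul_def (a b : Heis p) :
    a * b = ⟨a.x + b.x, a.y + b.y, a.z + b.z - a.y * b.x⟩ := rfl
lemma one_def : (1 : Heis p) = ⟨0, 0, 0⟩ := rfl
lemma inv_def (a : Heis p) : a⁻¹ = ⟨-a.x, -a.y, -a.z - a.y * a.x⟩ := rfl

instance : Group (Heis p) where
  mul_assoc a b c := by ext <;> simp [mul_def] <;> ring
  one_mul a := by ext <;> simp [mul_def, one_def]
  mul_one a := by ext <;> simp [mul_def, one_def]
  inv_mul_cancel a := by ext <;> simp [mul_def, one_def, inv_def] <;> ring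

/-- The generator `u`. -/
def u : Heis p := ⟨1, 0, 0⟩
/-- The generator `v`. -/
def v : Heis p := ⟨0, 1, 0⟩
/-- The generator `k = [u, v]`. -/
def k : Heis p := ⟨0, 0, 1⟩

end Heis

open scoped commutatorElement

/-!
Commutators in `H` are central. Hence inner automorphisms of `H` commute, which gives
`ι(g · ι(gⁿ)(h)) = ι(g) ι(h)` and `(ι(g) ι(h))ⁿ = ι(g)ⁿ ι(h)ⁿ`; and `ι(g)(h) = [g,h] h` with
`[g,h]` central gives `ι(gⁿ)(h) = [g,h]ⁿ h`, hence the circle operation.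
-/

open Subgroup

section CentralCommutators

variable {G : Type*} [Group G]

lemma MulAut.conj_eq_one_of_mem_center {z : G} (hz : z ∈ center G) : MulAut.conj z = 1 := by
  ext h
  simp [← mem_center_iff.mp hz h]

lemma MulAut.commute_conj_of_commutatorElement_mem_center {a b : G} (hab : ⁅a, b⁆ ∈ center G) :
    Commute (MulAut.conj a) (MulAut.conj b) := by
  have hba : a * b = ⁅a, b⁆ * (b * a) := by rw [commutatorElement_def]; group
  show MulAut.conj a * MulAut.conj b = MulAut.conj b * MulAut.conj a
  rw [← map_mul, ← map_mul, hba, map_mul, conj_eq_one_of_mem_center hab, one_mul]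

lemma MulAut.conj_pow_apply_of_commutatorElement_mem_center {g h : G} (hc : ⁅g, h⁆ ∈ center G)
    (n : ℕ) : MulAut.conj (g ^ n) h = ⁅g, h⁆ ^ n * h := by
  induction n with
  | zero => simp
  | succ n ih =>
    have hconj : MulAut.conj g h = ⁅g, h⁆ * h := by simp [commutatorElement_def]
    rw [pow_succ, map_mul, MulAut.mul_apply, hconj, map_mul, ih, MulAut.conj_apply,
      mem_center_iff.mp hc, mul_inv_cancel_right, pow_succ', mul_assoc]

theorem isGamma_conj_pow (hc : ∀ a b : G, ⁅a, b⁆ ∈ center G) (n : ℕ) :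
    IsGamma (fun g : G => MulAut.conj (g ^ n)) := by
  intro g h
  have hcomm (a b : G) := MulAut.commute_conj_of_commutatorElement_mem_center (hc a b)
  have hconj : MulAut.conj (g * MulAut.conj (g ^ n) h) = MulAut.conj g * MulAut.conj h := by
    rw [MulAut.conj_apply, map_mul, map_mul, map_mul, map_inv, (hcomm _ h).eq,
      mul_inv_cancel_right]
  simp only [map_pow, ← (hcomm g h).mul_pow, ← map_mul] at hconj ⊢
  rw [hconj]

lemma mul_conj_pow_apply_of_commutatorElement_mem_center {g h : G} (hc : ⁅g, h⁆ ∈ center G)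
    (n : ℕ) : g * MulAut.conj (g ^ n) h = g * h * ⁅g, h⁆ ^ n := by
  rw [MulAut.conj_pow_apply_of_commutatorElement_mem_center hc, mul_assoc,
    mem_center_iff.mp (pow_mem hc n) h]

end CentralCommutators

namespace Heis

variable {p : ℕ}

lemma commutatorElement_eq (g h : Heis p) : ⁅g, h⁆ = ⟨0, 0, g.x * h.y - g.y * h.x⟩ := by
  rw [commutatorElement_def]
  ext <;> simp only [mul_def, inv_def] <;> ring

lemma mk_zero_zero_mem_center (c : ZMod p) : (⟨0, 0, c⟩ : Heis p) ∈ center (Heis p) :=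
  mem_center_iff.mpr fun g => by ext <;> simp only [mul_def] <;> ring

lemma commutatorElement_mem_center (g h : Heis p) : ⁅g, h⁆ ∈ center (Heis p) := by
  rw [commutatorElement_eq]
  exact mk_zero_zero_mem_center _

end Heis

theorem stmt16_general (p : ℕ) (α : ZMod p) :
    IsGamma (fun g : Heis p => MulAut.conj (g ^ α.val)) ∧
    ∀ g h : Heis p, g * (MulAut.conj (g ^ α.val)) h = g * h * ⁅g, h⁆ ^ α.val :=
  ⟨isGamma_conj_pow Heis.commutatorElement_mem_center α.val, fun g h =>
    mul_conj_pow_apply_of_commutatorElement_mem_center (Heis.commutatorElement_mem_center g h) _⟩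

/-- For `p` an odd prime, `H` the Heisenberg group of order `p³` and
`α ∈ ℤ/pℤ`, the map `γ(g) := ι(g^α)` is a gamma function on `H`, and the
associated circle operation is `g ∘ h = g·h·[g,h]^α`. -/
theorem stmt16 (p : ℕ) (hp : p.Prime) (hodd : Odd p) (α : ZMod p) :
    IsGamma (fun g : Heis p => MulAut.conj (g ^ α.val)) ∧
    ∀ g h : Heis p, g * (MulAut.conj (g ^ α.val)) h = g * h * ⁅g, h⁆ ^ α.val :=
  stmt16_general p α
end

section
/- Let p be an odd prime, H the Heisenberg group of order p³, and α ∈ ℤ/pℤ with α ≠ −1/2. Then the map B(uⁱ · vʲ · k^r) = u^{iα} · v^{jα} · k^{α²(r − ijα)(1+2α)^{-1}} (for 0 ≤ i,j,r < p, exponents read mod p) is a Rota–Baxter operator on H, and ι(B(g)) = ι(g^α) for all g ∈ H. -/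
lemma one_add_two_mul_ne_zero {K : Type*} [Field K] {α : K} (hα : α ≠ -2⁻¹) :
    1 + 2 * α ≠ 0 := by
  intro h
  have h2 : (2 : K) ≠ 0 := fun h2 => by simp [h2] at h
  exact hα (by field_simp; linear_combination h)

namespace Heis

variable {p : ℕ}

@[simp] lemma mul_x (a b : Heis p) : (a * b).x = a.x + b.x := rfl
@[simp] lemma mul_y (a b : Heis p) : (a * b).y = a.y + b.y := rfl
@[simp] lemma mul_z (a b : Heis p) : (a * b).z = a.z + b.z - a.y * b.x := rfl
@[simp] lemma inv_x (a : Heis p) : a⁻¹.x = -a.x := rfl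
@[simp] lemma inv_y (a : Heis p) : a⁻¹.y = -a.y := rfl
@[simp] lemma inv_z (a : Heis p) : a⁻¹.z = -a.z - a.y * a.x := rfl
@[simp] lemma one_x : (1 : Heis p).x = 0 := rfl
@[simp] lemma one_y : (1 : Heis p).y = 0 := rfl
@[simp] lemma one_z : (1 : Heis p).z = 0 := rfl

lemma u_pow (n : ℕ) : (u : Heis p) ^ n = ⟨n, 0, 0⟩ := by
  induction n with
  | zero => ext <;> simp
  | succ n ih => rw [pow_succ, ih]; ext <;> simp [u]

lemma v_pow (n : ℕ) : (v : Heis p) ^ n = ⟨0, n, 0⟩ := by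
  induction n with
  | zero => ext <;> simp
  | succ n ih => rw [pow_succ, ih]; ext <;> simp [v]

lemma k_pow (n : ℕ) : (k : Heis p) ^ n = ⟨0, 0, n⟩ := by
  induction n with
  | zero => ext <;> simp
  | succ n ih => rw [pow_succ, ih]; ext <;> simp [k]

lemma u_pow_mul_v_pow_mul_k_pow [NeZero p] (i j r : ZMod p) :
    (u : Heis p) ^ i.val * v ^ j.val * k ^ r.val = ⟨i, j, r⟩ := by
  ext <;> simp [u_pow, v_pow, k_pow]

lemma pow_x (g : Heis p) (n : ℕ) : (g ^ n).x = n * g.x := by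
  induction n with
  | zero => simp
  | succ n ih => simp [pow_succ, ih]; ring

lemma pow_y (g : Heis p) (n : ℕ) : (g ^ n).y = n * g.y := by
  induction n with
  | zero => simp
  | succ n ih => simp [pow_succ, ih]; ring

lemma conj_eq_conj_of_x_eq_of_y_eq {a b : Heis p} (hx : a.x = b.x) (hy : a.y = b.y) :
    MulAut.conj a = MulAut.conj b := by
  ext h <;> simp only [MulAut.conj_apply, mul_x, mul_y, mul_z, inv_x, inv_y, inv_z, hx, hy]
  all_goals ring

def rotaBaxterOp (α : ZMod p) (g : Heis p) : Heis p :=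
  ⟨α * g.x, α * g.y, α ^ 2 * (g.z - g.x * g.y * α) * (1 + 2 * α)⁻¹⟩

lemma isRotaBaxter_rotaBaxterOp {α : ZMod p} (hα : IsUnit (1 + 2 * α)) :
    IsRotaBaxter (rotaBaxterOp α) := by
  intro g h
  have hinv : (1 + 2 * α) * (1 + 2 * α)⁻¹ = 1 := ZMod.mul_inv_of_unit _ hα
  ext <;> simp only [rotaBaxterOp, mul_x, mul_y, mul_z, inv_x, inv_y, inv_z]
  · ring
  · ring
  -- the two sides differ by `α² g.y h.x ((1 + 2α)(1 + 2α)⁻¹ - 1)`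
  · linear_combination (-(α ^ 2 * g.y * h.x)) * hinv

lemma conj_rotaBaxterOp [NeZero p] (α : ZMod p) (g : Heis p) :
    MulAut.conj (rotaBaxterOp α g) = MulAut.conj (g ^ α.val) :=
  conj_eq_conj_of_x_eq_of_y_eq (by simp [rotaBaxterOp, pow_x])
    (by simp [rotaBaxterOp, pow_y])

end Heis

theorem stmt18_general (p : ℕ) (hp : p.Prime) (α : ZMod p)
    (hα : α ≠ -(2⁻¹ : ZMod p)) :
    ∃ B : Heis p → Heis p,
      (∀ i j r : ZMod p,
        B (Heis.u ^ i.val * Heis.v ^ j.val * Heis.k ^ r.val) =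
          Heis.u ^ (α * i).val * Heis.v ^ (α * j).val *
            Heis.k ^ (α ^ 2 * (r - i * j * α) * (1 + 2 * α)⁻¹).val) ∧
      IsRotaBaxter B ∧
      ∀ g : Heis p, MulAut.conj (B g) = MulAut.conj (g ^ α.val) := by
  have : Fact p.Prime := ⟨hp⟩
  refine ⟨Heis.rotaBaxterOp α, fun i j r => ?_,
    Heis.isRotaBaxter_rotaBaxterOp (one_add_two_mul_ne_zero hα).isUnit,
    Heis.conj_rotaBaxterOp α⟩
  simp only [Heis.u_pow_mul_v_pow_mul_k_pow]
  rfl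

/-- For `p` an odd prime, `H` the Heisenberg group of order `p³` and
`α ∈ ℤ/pℤ` with `α ≠ -1/2`, the map
`B(uⁱ·vʲ·k^r) = u^(iα) · v^(jα) · k^(α²(r - ijα)(1+2α)⁻¹)`
is a Rota–Baxter operator on `H` with `ι(B(g)) = ι(g^α)` for all `g`. -/
theorem stmt18 (p : ℕ) (hp : p.Prime) (hodd : Odd p) (α : ZMod p)
    (hα : α ≠ -(2⁻¹ : ZMod p)) :
    ∃ B : Heis p → Heis p,
      (∀ i j r : ZMod p,
        B (Heis.u ^ i.val * Heis.v ^ j.val * Heis.k ^ r.val) =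
          Heis.u ^ (α * i).val * Heis.v ^ (α * j).val *
            Heis.k ^ (α ^ 2 * (r - i * j * α) * (1 + 2 * α)⁻¹).val) ∧
      IsRotaBaxter B ∧
      ∀ g : Heis p, MulAut.conj (B g) = MulAut.conj (g ^ α.val) :=
  stmt18_general p hp α hα
end

section
/- Let p be an odd prime, H the Heisenberg group of order p³, and α = −1/2 ∈ ℤ/pℤ. Then the gamma function γ(g) = ι(g^α) does not come from any Rota–Baxter operator: there is no Rota–Baxter operator B on H with ι(B(g)) = ι(g^α) for all g ∈ H. -/
/-- For `p` an odd prime, `H` the Heisenberg group of order `p³` and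
`α = -1/2 ∈ ℤ/pℤ`, the gamma function `γ(g) = ι(g^α)` does not come from any
Rota–Baxter operator: there is no Rota–Baxter operator `B` on `H` with
`ι(B(g)) = ι(g^α)` for all `g`. -/
theorem stmt19 (p : ℕ) (hp : p.Prime) (hodd : Odd p) :
    ¬ ∃ B : Heis p → Heis p, IsRotaBaxter B ∧
      ∀ g : Heis p,
        MulAut.conj (B g) = MulAut.conj (g ^ (-(2⁻¹ : ZMod p)).val) := by
  rintro ⟨B, hRB, hconj⟩
  haveI : Fact p.Prime := ⟨hp⟩
  set α : ZMod p := -(2⁻¹ : ZMod p) with hα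
  set n : ℕ := α.val with hn
  have hnc : (n : ZMod p) = α := ZMod.natCast_rightInverse α
  have h2 : (2 : ZMod p) ≠ 0 := by
    intro h
    have : ((2 : ℕ) : ZMod p) = 0 := by exact_mod_cast h
    have hdvd : p ∣ 2 := (ZMod.natCast_eq_zero_iff 2 p).mp this
    have hp2 : p = 2 := (Nat.prime_dvd_prime_iff_eq hp Nat.prime_two).mp hdvd
    rw [hp2, Nat.odd_iff] at hodd
    omega
  have h2α : (2 : ZMod p) * α = -1 := by
    rw [hα, mul_neg, mul_inv_cancel₀ h2]
  -- powers of generators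
  have hu : ∀ m : ℕ, (Heis.u ^ m : Heis p) = ⟨(m : ZMod p), 0, 0⟩ := by
    intro m
    induction m with
    | zero => simp [Heis.one_def]
    | succ m ih =>
        rw [pow_succ, ih]
        ext <;> simp [Heis.mul_def, Heis.u]
  have hv : ∀ m : ℕ, (Heis.v ^ m : Heis p) = ⟨0, (m : ZMod p), 0⟩ := by
    intro m
    induction m with
    | zero => simp [Heis.one_def]
    | succ m ih =>
        rw [pow_succ, ih]
        ext <;> simp [Heis.mul_def, Heis.v]
  -- conjugation of u and v by an arbitrary element
  have hcu : ∀ A : Heis p, A * Heis.u * A⁻¹ = ⟨1, 0, -A.y⟩ := by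
    intro A
    ext <;> simp [Heis.mul_def, Heis.inv_def, Heis.u] <;> ring
  have hcv : ∀ A : Heis p, A * Heis.v * A⁻¹ = ⟨0, 1, A.x⟩ := by
    intro A
    ext <;> simp [Heis.mul_def, Heis.inv_def, Heis.v] <;> ring
  have key : ∀ g h : Heis p, B g * h * (B g)⁻¹ = g ^ n * h * (g ^ n)⁻¹ := by
    intro g h
    have h1 := congrArg (fun φ : MulAut (Heis p) => φ h) (hconj g)
    simp only [MulAut.conj_apply] at h1
    exact h1
  have hBux : (B Heis.u).x = α := by
    have h1 := congrArg Heis.z (key Heis.u Heis.v)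
    rw [hcv, hcv, hu n] at h1
    simpa [hnc] using h1
  have hBuy : (B Heis.u).y = 0 := by
    have h1 := congrArg Heis.z (key Heis.u Heis.u)
    rw [hcu, hcu, hu n] at h1
    simpa using h1
  have hBvx : (B Heis.v).x = 0 := by
    have h1 := congrArg Heis.z (key Heis.v Heis.v)
    rw [hcv, hcv, hv n] at h1
    simpa using h1
  have hBvy : (B Heis.v).y = α := by
    have h1 := congrArg Heis.z (key Heis.v Heis.u)
    rw [hcu, hcu, hv n] at h1
    simpa [hnc] using h1
  -- the two circle products coincide
  have hcirc : (Heis.v : Heis p) * B Heis.v * Heis.u * (B Heis.v)⁻¹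
      = Heis.u * B Heis.u * Heis.v * (B Heis.u)⁻¹ := by
    have e1 : (Heis.v : Heis p) * B Heis.v * Heis.u * (B Heis.v)⁻¹
        = Heis.v * (B Heis.v * Heis.u * (B Heis.v)⁻¹) := by group
    have e2 : (Heis.u : Heis p) * B Heis.u * Heis.v * (B Heis.u)⁻¹
        = Heis.u * (B Heis.u * Heis.v * (B Heis.u)⁻¹) := by group
    rw [e1, e2, hcu, hcv, hBux, hBvy]
    simp only [Heis.mul_def, Heis.u, Heis.v, Heis.mk.injEq]
    refine ⟨by ring, by ring, by linear_combination -h2α⟩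
  -- Rota-Baxter gives commutation of B u and B v
  have hcomm : B Heis.v * B Heis.u = B Heis.u * B Heis.v := by
    rw [← hRB Heis.v Heis.u, ← hRB Heis.u Heis.v, hcirc]
  have hz := congrArg Heis.z hcomm
  simp only [Heis.mul_def, hBux, hBuy, hBvx, hBvy] at hz
  have hα0 : α = 0 := by
    have h1 : α * α = 0 := by linear_combination -hz
    exact mul_self_eq_zero.mp h1
  rw [hα0, mul_zero] at h2α
  exact one_ne_zero (by linear_combination h2α : (1 : ZMod p) = 0)
end
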